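/- arXiv:1812.06380 — 3 statements merged into one kernel-verified Lean document; each statement's English description precedes it below -/
import Mathlib

section
/- Let G : ℝ → ℝ be continuous, bounded above by a constant M, and suppose there exists α > 0 such that G(x) < -α·|x| for all x with |x| sufficiently large. Then lim_{N→∞} (1/N)·ln(∫_ℝ e^{N·G(x)} dx) = sup_{x ∈ ℝ} G(x). -/
open MeasureTheory Real Filter Set

lemma integrable_exp_neg_mul_abs' {b : ℝ} (hb : 0 < b) :
    Integrable fun x : ℝ => Real.exp (-b * |x|) := by
  have hIoi : IntegrableOn (fun x : ℝ => Real.exp (-b * |x|)) (Ioi 0) := by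
    refine (exp_neg_integrableOn_Ioi 0 hb).congr_fun ?_ measurableSet_Ioi
    intro x hx
    simp [abs_of_pos (mem_Ioi.mp hx)]
  have hIic : IntegrableOn (fun x : ℝ => Real.exp (-b * |x|)) (Iic 0) := by
    rw [← Measure.map_neg_eq_self (volume : Measure ℝ)]
    have m : MeasurableEmbedding fun x : ℝ => -x :=
      (Homeomorph.neg ℝ).measurableEmbedding
    rw [m.integrableOn_map_iff]
    simp_rw [Function.comp_def, abs_neg, neg_preimage, neg_Iic, neg_zero]
    exact Iff.mpr integrableOn_Ici_iff_integrableOn_Ioi hIoi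
  have := hIic.union hIoi
  rwa [Iic_union_Ioi, integrableOn_univ] at this

theorem laplace_principle (G : ℝ → ℝ) (M : ℝ) (hG : Continuous G)
    (hbdd : ∀ x, G x ≤ M)
    (hdecay : ∃ α > 0, ∃ R : ℝ, ∀ x : ℝ, R ≤ |x| → G x < -α * |x|) :
    Filter.Tendsto
      (fun N : ℕ => (1 / (N : ℝ)) * Real.log (∫ x : ℝ, Real.exp (N * G x)))
      Filter.atTop (nhds (⨆ x : ℝ, G x)) := by
  obtain ⟨α, hα, R, hR⟩ := hdecay
  set S := ⨆ x : ℝ, G x with hS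
  have hbdd' : BddAbove (Set.range G) := ⟨M, by rintro _ ⟨x, rfl⟩; exact hbdd x⟩
  have hGS : ∀ x, G x ≤ S := fun x => le_ciSup hbdd' x
  -- integrability
  have hint : ∀ c : ℝ, 0 < c → Integrable fun x : ℝ => Real.exp (c * G x) := by
    intro c hc
    set C : ℝ := max 1 (Real.exp (c * M) * Real.exp (c * α * R)) with hC
    have hC1 : 1 ≤ C := le_max_left _ _
    refine Integrable.mono' ((integrable_exp_neg_mul_abs'
      (b := c * α) (by positivity)).const_mul C)
      (Continuous.aestronglyMeasurable (by continuity)) ?_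
    refine Eventually.of_forall fun x => ?_
    rw [Real.norm_eq_abs, Real.abs_exp]
    rcases le_or_gt R |x| with h | h
    · have h1 : G x < -α * |x| := hR x h
      have h2 : c * G x ≤ -(c * α) * |x| := by nlinarith
      calc Real.exp (c * G x) ≤ Real.exp (-(c * α) * |x|) := Real.exp_le_exp.2 h2
        _ ≤ C * Real.exp (-(c * α) * |x|) := le_mul_of_one_le_left (Real.exp_pos _).le hC1
    · have h1 : Real.exp (c * G x) ≤ Real.exp (c * M) := Real.exp_le_exp.2 (by
        have := hbdd x; nlinarith)
      have h2 : Real.exp (c * M) ≤ C * Real.exp (-(c * α) * |x|) := by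
        have h3 : Real.exp (c * M) * Real.exp (c * α * R) * Real.exp (-(c * α) * |x|) ≤
            C * Real.exp (-(c * α) * |x|) :=
          mul_le_mul_of_nonneg_right (le_max_right _ _) (Real.exp_pos _).le
        calc Real.exp (c * M)
            = Real.exp (c * M) * Real.exp (c * α * |x|) * Real.exp (-(c * α) * |x|) := by
              rw [mul_assoc, ← Real.exp_add,
                show c * α * |x| + -(c * α) * |x| = 0 by ring, Real.exp_zero, mul_one]
          _ ≤ Real.exp (c * M) * Real.exp (c * α * R) * Real.exp (-(c * α) * |x|) := by
              have hle : Real.exp (c * α * |x|) ≤ Real.exp (c * α * R) := Real.exp_le_exp.2 (by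
                have : (0:ℝ) ≤ c * α := by positivity
                nlinarith)
              exact mul_le_mul_of_nonneg_right
                (mul_le_mul_of_nonneg_left hle (Real.exp_pos _).le) (Real.exp_pos _).le
          _ ≤ C * Real.exp (-(c * α) * |x|) := h3
      exact h1.trans h2
  -- positivity of the integrals
  have hpos : ∀ c : ℝ, 0 < c → 0 < ∫ x : ℝ, Real.exp (c * G x) := by
    intro c hc
    rw [integral_pos_iff_support_of_nonneg_ae
      (Eventually.of_forall fun x => (Real.exp_pos _).le) (hint c hc)]
    have : Function.support (fun x : ℝ => Real.exp (c * G x)) = Set.univ := by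
      ext x; simp [Function.support, (Real.exp_pos _).ne']
    rw [this]
    simp
  set C₁ : ℝ := ∫ x : ℝ, Real.exp (1 * G x) with hC₁
  have hC₁pos : 0 < C₁ := hpos 1 one_pos
  -- upper bound for N ≥ 1
  have hupper : ∀ N : ℕ, 1 ≤ N →
      (1 / (N : ℝ)) * Real.log (∫ x : ℝ, Real.exp (N * G x)) ≤
        S + (Real.log C₁ - S) / N := by
    intro N hN
    have hN' : (1:ℝ) ≤ (N : ℝ) := by exact_mod_cast hN
    have hNpos : (0:ℝ) < (N : ℝ) := lt_of_lt_of_le one_pos hN'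
    have hIpos : 0 < ∫ x : ℝ, Real.exp ((N:ℝ) * G x) := hpos _ hNpos
    have key : (∫ x : ℝ, Real.exp ((N:ℝ) * G x)) ≤
        Real.exp (((N:ℝ) - 1) * S) * C₁ := by
      have : (∫ x : ℝ, Real.exp ((N:ℝ) * G x)) ≤
          ∫ x : ℝ, Real.exp (((N:ℝ) - 1) * S) * Real.exp (1 * G x) := by
        refine integral_mono (hint _ hNpos) ((hint 1 one_pos).const_mul _) fun x => ?_
        rw [← Real.exp_add]
        refine Real.exp_le_exp.2 ?_
        have h1 : ((N:ℝ) - 1) * G x ≤ ((N:ℝ) - 1) * S :=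
          mul_le_mul_of_nonneg_left (hGS x) (by linarith)
        nlinarith
      rwa [integral_const_mul] at this
    have hlog : Real.log (∫ x : ℝ, Real.exp ((N:ℝ) * G x)) ≤
        ((N:ℝ) - 1) * S + Real.log C₁ := by
      calc Real.log (∫ x : ℝ, Real.exp ((N:ℝ) * G x))
          ≤ Real.log (Real.exp (((N:ℝ) - 1) * S) * C₁) := Real.log_le_log hIpos key
        _ = ((N:ℝ) - 1) * S + Real.log C₁ := by
            rw [Real.log_mul (Real.exp_pos _).ne' hC₁pos.ne', Real.log_exp]
    have := mul_le_mul_of_nonneg_left hlog (by positivity : (0:ℝ) ≤ 1 / (N:ℝ))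
    calc (1 / (N : ℝ)) * Real.log (∫ x : ℝ, Real.exp (N * G x))
        ≤ (1 / (N:ℝ)) * (((N:ℝ) - 1) * S + Real.log C₁) := this
      _ = S + (Real.log C₁ - S) / N := by field_simp; ring
  refine tendsto_order.2 ⟨?_, ?_⟩
  · -- lower bound branch
    intro a ha
    set ε : ℝ := (S - a) / 2 with hε
    have hεpos : 0 < ε := by simp only [hε]; linarith
    obtain ⟨x₀, hx₀⟩ : ∃ x₀, S - ε < G x₀ := exists_lt_of_lt_ciSup (by linarith)
    have hnhds : ∀ᶠ x in nhds x₀, S - ε < G x :=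
      (hG.tendsto x₀).eventually (eventually_gt_nhds hx₀)
    obtain ⟨d, hd, hball⟩ := Metric.eventually_nhds_iff.1 hnhds
    -- on Icc (x₀ - d/2) (x₀ + d/2), G ≥ S - ε
    have hIcc : ∀ x ∈ Icc (x₀ - d/2) (x₀ + d/2), S - ε < G x := by
      intro x hx
      refine hball ?_
      rw [Real.dist_eq, abs_sub_lt_iff]
      constructor <;> [linarith [hx.2]; linarith [hx.1]]
    have hvol : (volume (Icc (x₀ - d/2) (x₀ + d/2))).toReal = d := by
      rw [Real.volume_Icc, ENNReal.toReal_ofReal (by linarith)]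
      ring
    have hlowerI : ∀ N : ℕ, 1 ≤ N →
        Real.exp ((N:ℝ) * (S - ε)) * d ≤ ∫ x : ℝ, Real.exp ((N:ℝ) * G x) := by
      intro N hN
      have hNpos : (0:ℝ) < (N : ℝ) := by exact_mod_cast hN
      have h1 : Real.exp ((N:ℝ) * (S - ε)) *
          (volume (Icc (x₀ - d/2) (x₀ + d/2))).toReal ≤
          ∫ x in Icc (x₀ - d/2) (x₀ + d/2), Real.exp ((N:ℝ) * G x) := by
        refine setIntegral_ge_of_const_le_real measurableSet_Icc
          (by rw [Real.volume_Icc]; exact ENNReal.ofReal_ne_top) ?_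
          ((hint _ hNpos).integrableOn)
        intro x hx
        exact Real.exp_le_exp.2 (mul_le_mul_of_nonneg_left (hIcc x hx).le hNpos.le)
      have h2 : (∫ x in Icc (x₀ - d/2) (x₀ + d/2), Real.exp ((N:ℝ) * G x)) ≤
          ∫ x : ℝ, Real.exp ((N:ℝ) * G x) :=
        setIntegral_le_integral (hint _ hNpos)
          (Eventually.of_forall fun x => (Real.exp_pos _).le)
      rw [hvol] at h1
      linarith
    have hL : Tendsto (fun N : ℕ => (S - ε) + Real.log d / N) atTop
        (nhds ((S - ε) + 0)) :=
      tendsto_const_nhds.add (tendsto_const_div_atTop_nhds_zero_nat _)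
    rw [add_zero] at hL
    have haε : a < S - ε := by simp only [hε]; linarith
    filter_upwards [hL.eventually (eventually_gt_nhds haε), eventually_ge_atTop 1]
      with N hN1 hN2
    have hNpos : (0:ℝ) < (N : ℝ) := by exact_mod_cast hN2
    have hlog : (N:ℝ) * (S - ε) + Real.log d ≤
        Real.log (∫ x : ℝ, Real.exp ((N:ℝ) * G x)) := by
      calc (N:ℝ) * (S - ε) + Real.log d
          = Real.log (Real.exp ((N:ℝ) * (S - ε)) * d) := by
            rw [Real.log_mul (Real.exp_pos _).ne' (by linarith), Real.log_exp]
        _ ≤ Real.log (∫ x : ℝ, Real.exp ((N:ℝ) * G x)) :=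
            Real.log_le_log (by positivity) (hlowerI N hN2)
    have h3 := mul_le_mul_of_nonneg_left hlog (by positivity : (0:ℝ) ≤ 1 / (N:ℝ))
    have h4 : (1 / (N:ℝ)) * ((N:ℝ) * (S - ε) + Real.log d) =
        (S - ε) + Real.log d / N := by field_simp
    rw [h4] at h3
    exact lt_of_lt_of_le hN1 h3
  · -- upper bound branch
    intro b hb
    have hU : Tendsto (fun N : ℕ => S + (Real.log C₁ - S) / N) atTop
        (nhds (S + 0)) :=
      tendsto_const_nhds.add (tendsto_const_div_atTop_nhds_zero_nat _)
    rw [add_zero] at hU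
    filter_upwards [hU.eventually (eventually_lt_nhds hb), eventually_ge_atTop 1]
      with N hN1 hN2
    exact lt_of_le_of_lt (hupper N hN2) hN1
end

section
/- Let β > 0, μ < 0, ν > 0. For V > 0 define p_V = (1/(β·V))·ln(∑_{n=0}^∞ exp(β·(μ·n + 2·√V·ν·√(n+1)))). Then the series converges for every V > 0, and lim_{V→∞} p_V = -ν²/μ. -/
private lemma amgm_aux (V b ν c : ℝ) (hV : 0 ≤ V) (hb : 0 ≤ b) (hν : 0 ≤ ν) (hc : 0 < c) :
    2 * Real.sqrt V * ν * Real.sqrt b ≤ V * ν ^ 2 / c + c * b := by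
  have h1 : Real.sqrt V ^ 2 = V := Real.sq_sqrt hV
  have h2 : Real.sqrt b ^ 2 = b := Real.sq_sqrt hb
  have key : 2 * Real.sqrt V * ν * Real.sqrt b * c ≤ V * ν ^ 2 + c ^ 2 * b := by
    nlinarith [sq_nonneg (Real.sqrt V * ν - c * Real.sqrt b)]
  have h3 : 2 * Real.sqrt V * ν * Real.sqrt b ≤ (V * ν ^ 2 + c ^ 2 * b) / c :=
    (le_div_iff₀ hc).mpr key
  calc 2 * Real.sqrt V * ν * Real.sqrt b ≤ (V * ν ^ 2 + c ^ 2 * b) / c := h3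
    _ = V * ν ^ 2 / c + c * b := by field_simp

private lemma key_bound (β μ ν V c : ℝ) (hβ : 0 < β) (hν : 0 < ν) (hV : 0 < V)
    (hc : 0 < c) (n : ℕ) :
    Real.exp (β * (μ * n + 2 * Real.sqrt V * ν * Real.sqrt (n + 1))) ≤
      Real.exp (β * (V * ν ^ 2 / c + c)) * Real.exp (β * (μ + c)) ^ n := by
  rw [← Real.exp_nat_mul, ← Real.exp_add, Real.exp_le_exp]
  have h1 : 2 * Real.sqrt V * ν * Real.sqrt ((n : ℝ) + 1) ≤ V * ν ^ 2 / c + c * ((n : ℝ) + 1) :=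
    amgm_aux V ((n : ℝ) + 1) ν c hV.le (by positivity) hν.le hc
  nlinarith [mul_le_mul_of_nonneg_left h1 hβ.le]

private lemma summable_term (β μ ν V : ℝ) (hβ : 0 < β) (hμ : μ < 0) (hν : 0 < ν) (hV : 0 < V) :
    Summable (fun n : ℕ =>
      Real.exp (β * (μ * n + 2 * Real.sqrt V * ν * Real.sqrt (n + 1)))) := by
  have hc : (0 : ℝ) < -μ / 2 := by linarith
  have hr : Real.exp (β * (μ + -μ / 2)) < 1 := by
    rw [Real.exp_lt_one_iff]
    nlinarith
  apply Summable.of_nonneg_of_le (fun n => (Real.exp_pos _).le)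
    (fun n => key_bound β μ ν V (-μ / 2) hβ hν hV hc n)
  exact (summable_geometric_of_lt_one (Real.exp_pos _).le hr).mul_left _

private lemma pressure_upper (β μ ν V c : ℝ) (hβ : 0 < β) (hμ : μ < 0) (hν : 0 < ν)
    (hV : 0 < V) (hc : 0 < c) (hcμ : c < -μ) :
    (1 / (β * V)) * Real.log (∑' n : ℕ,
        Real.exp (β * (μ * n + 2 * Real.sqrt V * ν * Real.sqrt (n + 1)))) ≤
      ν ^ 2 / c + (c - Real.log (1 - Real.exp (β * (μ + c))) / β) / V := by
  set r := Real.exp (β * (μ + c)) with hrdef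
  have hr1 : r < 1 := by rw [hrdef, Real.exp_lt_one_iff]; nlinarith
  have hr0 : 0 < r := Real.exp_pos _
  have hsum := summable_term β μ ν V hβ hμ hν hV
  have hgeo : Summable (fun n : ℕ => Real.exp (β * (V * ν ^ 2 / c + c)) * r ^ n) :=
    (summable_geometric_of_lt_one hr0.le hr1).mul_left _
  have hle : (∑' n : ℕ, Real.exp (β * (μ * n + 2 * Real.sqrt V * ν * Real.sqrt (n + 1)))) ≤
      Real.exp (β * (V * ν ^ 2 / c + c)) * (1 - r)⁻¹ := by
    calc (∑' n : ℕ, Real.exp (β * (μ * n + 2 * Real.sqrt V * ν * Real.sqrt (n + 1))))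
        ≤ ∑' n : ℕ, Real.exp (β * (V * ν ^ 2 / c + c)) * r ^ n :=
          Summable.tsum_le_tsum (fun n => key_bound β μ ν V c hβ hν hV hc n) hsum hgeo
      _ = Real.exp (β * (V * ν ^ 2 / c + c)) * ∑' n : ℕ, r ^ n := tsum_mul_left
      _ = Real.exp (β * (V * ν ^ 2 / c + c)) * (1 - r)⁻¹ := by
          rw [tsum_geometric_of_lt_one hr0.le hr1]
  have htpos : 0 < ∑' n : ℕ, Real.exp (β * (μ * n + 2 * Real.sqrt V * ν * Real.sqrt (n + 1))) :=
    lt_of_lt_of_le (Real.exp_pos _) (Summable.le_tsum hsum 0 (fun _ _ => (Real.exp_pos _).le))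
  have hlog : Real.log (∑' n : ℕ,
      Real.exp (β * (μ * n + 2 * Real.sqrt V * ν * Real.sqrt (n + 1)))) ≤
      β * (V * ν ^ 2 / c + c) - Real.log (1 - r) := by
    have h1 := Real.log_le_log htpos hle
    rwa [Real.log_mul (Real.exp_ne_zero _)
      (inv_ne_zero (ne_of_gt (by linarith : (0:ℝ) < 1 - r))), Real.log_exp, Real.log_inv,
      ← sub_eq_add_neg] at h1
  have hβV : 0 < β * V := by positivity
  calc (1 / (β * V)) * Real.log (∑' n : ℕ,
        Real.exp (β * (μ * n + 2 * Real.sqrt V * ν * Real.sqrt (n + 1))))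
      ≤ (1 / (β * V)) * (β * (V * ν ^ 2 / c + c) - Real.log (1 - r)) :=
        mul_le_mul_of_nonneg_left hlog (by positivity)
    _ = ν ^ 2 / c + (c - Real.log (1 - r) / β) / V := by
        field_simp
        ring

private lemma pressure_lower (β μ ν V : ℝ) (hβ : 0 < β) (hμ : μ < 0) (hν : 0 < ν)
    (hV : 0 < V) :
    -ν ^ 2 / μ + μ / V ≤ (1 / (β * V)) * Real.log (∑' n : ℕ,
        Real.exp (β * (μ * n + 2 * Real.sqrt V * ν * Real.sqrt (n + 1)))) := by
  have hμ0 : μ ≠ 0 := ne_of_lt hμ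
  have hsum := summable_term β μ ν V hβ hμ hν hV
  set m : ℕ := ⌈V * ν ^ 2 / μ ^ 2⌉₊ with hmdef
  have hx0 : (0 : ℝ) ≤ V * ν ^ 2 / μ ^ 2 := by positivity
  have h1 : V * ν ^ 2 / μ ^ 2 ≤ (m : ℝ) := Nat.le_ceil _
  have h2 : (m : ℝ) < V * ν ^ 2 / μ ^ 2 + 1 := Nat.ceil_lt_add_one hx0
  -- sqrt bound
  have hs : Real.sqrt V * (ν / (-μ)) ≤ Real.sqrt ((m : ℝ) + 1) := by
    have hmneg : (0:ℝ) < -μ := neg_pos.mpr hμ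
    rw [Real.le_sqrt (mul_nonneg (Real.sqrt_nonneg V) (div_nonneg hν.le hmneg.le))
      (by positivity)]
    have : (Real.sqrt V * (ν / (-μ))) ^ 2 = V * ν ^ 2 / μ ^ 2 := by
      rw [mul_pow, Real.sq_sqrt hV.le]; ring
    rw [this]; linarith
  -- exponent bound
  have e1 : V * ν ^ 2 / μ + μ ≤ μ * (m : ℝ) := by
    have h3 : μ * (m : ℝ) ≥ μ * (V * ν ^ 2 / μ ^ 2 + 1) :=
      mul_le_mul_of_nonpos_left h2.le hμ.le
    have h4 : μ * (V * ν ^ 2 / μ ^ 2 + 1) = V * ν ^ 2 / μ + μ := by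
      field_simp
    linarith
  have e2 : 2 * (V * ν ^ 2) / (-μ) ≤ 2 * Real.sqrt V * ν * Real.sqrt ((m : ℝ) + 1) := by
    have hmul : 2 * Real.sqrt V * ν * (Real.sqrt V * (ν / (-μ))) ≤
        2 * Real.sqrt V * ν * Real.sqrt ((m : ℝ) + 1) :=
      mul_le_mul_of_nonneg_left hs
        (mul_nonneg (mul_nonneg (by norm_num) (Real.sqrt_nonneg V)) hν.le)
    have hVV : Real.sqrt V * Real.sqrt V = V := Real.mul_self_sqrt hV.le
    have hid : 2 * Real.sqrt V * ν * (Real.sqrt V * (ν / (-μ))) = 2 * (V * ν ^ 2) / (-μ) := by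
      have h5 : 2 * Real.sqrt V * ν * (Real.sqrt V * (ν / (-μ))) =
          2 * (Real.sqrt V * Real.sqrt V) * ν ^ 2 / (-μ) := by ring
      rw [h5, hVV]; ring
    exact le_trans (le_of_eq hid.symm) hmul
  have eexp : β * (-(V * ν ^ 2) / μ + μ) ≤
      β * (μ * (m : ℝ) + 2 * Real.sqrt V * ν * Real.sqrt ((m : ℝ) + 1)) := by
    have hsumexp : -(V * ν ^ 2) / μ + μ ≤
        μ * (m : ℝ) + 2 * Real.sqrt V * ν * Real.sqrt ((m : ℝ) + 1) := by
      have hid2 : V * ν ^ 2 / μ + 2 * (V * ν ^ 2) / (-μ) = -(V * ν ^ 2) / μ := by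
        rw [div_neg]
        ring
      linarith
    exact mul_le_mul_of_nonneg_left hsumexp hβ.le
  have hterm : Real.exp (β * (-(V * ν ^ 2) / μ + μ)) ≤ ∑' n : ℕ,
      Real.exp (β * (μ * n + 2 * Real.sqrt V * ν * Real.sqrt (n + 1))) :=
    le_trans (Real.exp_le_exp.mpr eexp) (Summable.le_tsum hsum m (fun _ _ => (Real.exp_pos _).le))
  have hlog : β * (-(V * ν ^ 2) / μ + μ) ≤ Real.log (∑' n : ℕ,
      Real.exp (β * (μ * n + 2 * Real.sqrt V * ν * Real.sqrt (n + 1)))) := by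
    have := Real.log_le_log (Real.exp_pos _) hterm
    rwa [Real.log_exp] at this
  have hβV : 0 < β * V := by positivity
  have key := mul_le_mul_of_nonneg_left hlog (le_of_lt (by positivity : (0:ℝ) < 1 / (β * V)))
  have hid3 : (1 / (β * V)) * (β * (-(V * ν ^ 2) / μ + μ)) = -ν ^ 2 / μ + μ / V := by
    field_simp
  linarith [hid3 ▸ key]

theorem zero_mode_pressure_limit (β μ ν : ℝ) (hβ : 0 < β) (hμ : μ < 0) (hν : 0 < ν) :
    (∀ V : ℝ, 0 < V →
        Summable (fun n : ℕ =>
          Real.exp (β * (μ * n + 2 * Real.sqrt V * ν * Real.sqrt (n + 1))))) ∧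
      Filter.Tendsto
        (fun V : ℝ =>
          (1 / (β * V)) * Real.log (∑' n : ℕ,
            Real.exp (β * (μ * n + 2 * Real.sqrt V * ν * Real.sqrt (n + 1)))))
        Filter.atTop (nhds (-ν ^ 2 / μ)) := by
  refine ⟨fun V hV => summable_term β μ ν V hβ hμ hν hV, ?_⟩
  rw [Metric.tendsto_atTop]
  intro ε hε
  set L : ℝ := -ν ^ 2 / μ with hL
  have hμ0 : μ ≠ 0 := ne_of_lt hμ
  have hμneg : (0:ℝ) < -μ := neg_pos.mpr hμ
  set η : ℝ := min (-μ / 2) (ε * μ ^ 2 / (4 * ν ^ 2)) with hηdef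
  have hη0 : 0 < η := lt_min (by linarith) (by positivity)
  have hη1 : η ≤ -μ / 2 := min_le_left _ _
  have hη2 : η ≤ ε * μ ^ 2 / (4 * ν ^ 2) := min_le_right _ _
  set c : ℝ := -μ - η with hcdef
  have hc0 : 0 < c := by simp only [hcdef]; linarith
  have hcμ : c < -μ := by simp only [hcdef]; linarith
  have hcm : μ ^ 2 / 2 ≤ c * (-μ) := by
    have : -μ / 2 ≤ c := by simp only [hcdef]; linarith
    nlinarith
  have hgap : ν ^ 2 / c ≤ L + ε / 2 := by
    have hdiff : ν ^ 2 / c - L = ν ^ 2 * η / (c * (-μ)) := by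
      rw [hL]
      field_simp
      ring
    have hnum : ν ^ 2 * η ≤ ε * μ ^ 2 / 4 := by
      have := mul_le_mul_of_nonneg_left hη2 (by positivity : (0:ℝ) ≤ ν ^ 2)
      have hid : ν ^ 2 * (ε * μ ^ 2 / (4 * ν ^ 2)) = ε * μ ^ 2 / 4 := by
        field_simp
      linarith [hid ▸ this]
    have hfrac : ν ^ 2 * η / (c * (-μ)) ≤ (ε * μ ^ 2 / 4) / (μ ^ 2 / 2) :=
      div_le_div₀ (by positivity) hnum (by positivity) hcm
    have hid2 : (ε * μ ^ 2 / 4) / (μ ^ 2 / 2) = ε / 2 := by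
      field_simp
      ring
    linarith [hid2 ▸ hfrac]
  set r : ℝ := Real.exp (β * (μ + c)) with hrdef
  have hr1 : r < 1 := by rw [hrdef, Real.exp_lt_one_iff]; nlinarith
  have hr0 : 0 < r := Real.exp_pos _
  set D : ℝ := c - Real.log (1 - r) / β with hDdef
  have hD0 : 0 ≤ D := by
    have hlog0 : Real.log (1 - r) ≤ 0 := Real.log_nonpos (by linarith) (by linarith)
    have : Real.log (1 - r) / β ≤ 0 := div_nonpos_of_nonpos_of_nonneg hlog0 hβ.le
    simp only [hDdef]; linarith
  refine ⟨max 1 (max (2 * (-μ) / ε) (2 * D / ε + 1)), fun V hV => ?_⟩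
  have hV1 : (1:ℝ) ≤ V := le_trans (le_max_left _ _) hV
  have hV0 : 0 < V := lt_of_lt_of_le one_pos hV1
  have hVa : 2 * (-μ) / ε ≤ V := le_trans (le_trans (le_max_left _ _) (le_max_right _ _)) hV
  have hVb : 2 * D / ε + 1 ≤ V := le_trans (le_trans (le_max_right _ _) (le_max_right _ _)) hV
  have hlow : L + μ / V ≤ (1 / (β * V)) * Real.log (∑' n : ℕ,
      Real.exp (β * (μ * n + 2 * Real.sqrt V * ν * Real.sqrt (n + 1)))) :=
    pressure_lower β μ ν V hβ hμ hν hV0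
  have hup : (1 / (β * V)) * Real.log (∑' n : ℕ,
      Real.exp (β * (μ * n + 2 * Real.sqrt V * ν * Real.sqrt (n + 1)))) ≤
      ν ^ 2 / c + D / V :=
    pressure_upper β μ ν V c hβ hμ hν hV0 hc0 hcμ
  have hμV : -(ε / 2) ≤ μ / V := by
    rw [le_div_iff₀ hV0]
    have := (div_le_iff₀ hε).mp hVa
    nlinarith
  have habs : ∀ D' V' : ℝ, 2 * D' ≤ (V' - 1) * ε → D' < ε / 2 * V' := by
    intro D' V' h2
    nlinarith
  have hDV : D / V < ε / 2 := by
    rw [div_lt_iff₀ hV0]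
    have h6 : 2 * D / ε ≤ V - 1 := by linarith
    exact habs D V ((div_le_iff₀ hε).mp h6)
  rw [Real.dist_eq, abs_sub_lt_iff]
  constructor <;> linarith
end

section
/- Griffiths' lemma, one-sided version: let (g_n) be convex functions on an open interval I converging pointwise to g. Then for every x ∈ I, limsup_n of the right derivative of g_n at x is at most the right derivative of g at x, and liminf_n of the left derivative of g_n at x is at least the left derivative of g at x. -/
open Set Filter Topology

/-- A convex function on an open interval has a right derivative at every point. -/
lemma convex_hasDerivWithinAt_Ioi {a b x : ℝ} {f : ℝ → ℝ} (hf : ConvexOn ℝ (Set.Ioo a b) f)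
    (hx : x ∈ Set.Ioo a b) :
    HasDerivWithinAt f (sInf (slope f x '' Set.Ioo x b)) (Set.Ioi x) x := by
  obtain ⟨hax, hxb⟩ := hx
  have hx : x ∈ Set.Ioo a b := ⟨hax, hxb⟩
  have hmono : MonotoneOn (slope f x) (Set.Ioo x b) := by
    intro u hu v hv huv
    exact hf.slope_mono hx ⟨⟨hax.trans hu.1, hu.2⟩, hu.1.ne'⟩
      ⟨⟨hax.trans hv.1, hv.2⟩, hv.1.ne'⟩ huv
  have hne : (Set.Ioo x b).Nonempty := nonempty_Ioo.2 hxb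
  have hbdd : BddBelow (slope f x '' Set.Ioo x b) := by
    obtain ⟨w, hw⟩ := nonempty_Ioo.2 hax
    refine ⟨slope f x w, ?_⟩
    rintro _ ⟨y, hy, rfl⟩
    exact hf.slope_mono hx ⟨⟨hw.1, hw.2.trans hxb⟩, hw.2.ne⟩
      ⟨⟨hax.trans hy.1, hy.2⟩, hy.1.ne'⟩ (hw.2.trans hy.1).le
  have h := hmono.tendsto_nhdsWithin_Ioo_right hne hbdd
  rw [hasDerivWithinAt_iff_tendsto_slope' notMem_Ioi_self]
  simpa [Set.diff_singleton_eq_self notMem_Ioi_self] using h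

/-- A convex function on an open interval has a left derivative at every point. -/
lemma convex_hasDerivWithinAt_Iio {a b x : ℝ} {f : ℝ → ℝ} (hf : ConvexOn ℝ (Set.Ioo a b) f)
    (hx : x ∈ Set.Ioo a b) :
    HasDerivWithinAt f (sSup (slope f x '' Set.Ioo a x)) (Set.Iio x) x := by
  obtain ⟨hax, hxb⟩ := hx
  have hx : x ∈ Set.Ioo a b := ⟨hax, hxb⟩
  have hmono : MonotoneOn (slope f x) (Set.Ioo a x) := by
    intro u hu v hv huv
    exact hf.slope_mono hx ⟨⟨hu.1, hu.2.trans hxb⟩, hu.2.ne⟩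
      ⟨⟨hv.1, hv.2.trans hxb⟩, hv.2.ne⟩ huv
  have hne : (Set.Ioo a x).Nonempty := nonempty_Ioo.2 hax
  have hbdd : BddAbove (slope f x '' Set.Ioo a x) := by
    obtain ⟨w, hw⟩ := nonempty_Ioo.2 hxb
    refine ⟨slope f x w, ?_⟩
    rintro _ ⟨y, hy, rfl⟩
    exact hf.slope_mono hx ⟨⟨hy.1, hy.2.trans hxb⟩, hy.2.ne⟩
      ⟨⟨hax.trans hw.1, hw.2⟩, hw.1.ne'⟩ (hy.2.trans hw.1).le
  have h := hmono.tendsto_nhdsWithin_Ioo_left hne hbdd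
  rw [hasDerivWithinAt_iff_tendsto_slope' notMem_Iio_self]
  simpa [Set.diff_singleton_eq_self notMem_Iio_self] using h

/-- The right derivative equals the infimum of slopes to the right. -/
lemma convex_derivWithin_Ioi_eq {a b x : ℝ} {f : ℝ → ℝ} (hf : ConvexOn ℝ (Set.Ioo a b) f)
    (hx : x ∈ Set.Ioo a b) :
    derivWithin f (Set.Ioi x) x = sInf (slope f x '' Set.Ioo x b) :=
  (convex_hasDerivWithinAt_Ioi hf hx).derivWithin (uniqueDiffWithinAt_Ioi x)

/-- The left derivative equals the supremum of slopes to the left. -/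
lemma convex_derivWithin_Iio_eq {a b x : ℝ} {f : ℝ → ℝ} (hf : ConvexOn ℝ (Set.Ioo a b) f)
    (hx : x ∈ Set.Ioo a b) :
    derivWithin f (Set.Iio x) x = sSup (slope f x '' Set.Ioo a x) :=
  (convex_hasDerivWithinAt_Iio hf hx).derivWithin (uniqueDiffWithinAt_Iio x)

/-- The right derivative of a convex function is bounded below by slopes from the left. -/
lemma slope_le_derivWithin_Ioi {a b x w : ℝ} {f : ℝ → ℝ} (hf : ConvexOn ℝ (Set.Ioo a b) f)
    (hx : x ∈ Set.Ioo a b) (hw : w ∈ Set.Ioo a x) :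
    slope f x w ≤ derivWithin f (Set.Ioi x) x := by
  rw [convex_derivWithin_Ioi_eq hf hx]
  refine le_csInf ((nonempty_Ioo.2 hx.2).image _) ?_
  rintro _ ⟨y, hy, rfl⟩
  exact hf.slope_mono hx ⟨⟨hw.1, hw.2.trans hx.2⟩, hw.2.ne⟩
    ⟨⟨hx.1.trans hy.1, hy.2⟩, hy.1.ne'⟩ (hw.2.trans hy.1).le

/-- The left derivative of a convex function is bounded above by slopes to the right. -/
lemma derivWithin_Iio_le_slope {a b x w : ℝ} {f : ℝ → ℝ} (hf : ConvexOn ℝ (Set.Ioo a b) f)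
    (hx : x ∈ Set.Ioo a b) (hw : w ∈ Set.Ioo x b) :
    derivWithin f (Set.Iio x) x ≤ slope f x w := by
  rw [convex_derivWithin_Iio_eq hf hx]
  refine csSup_le ((nonempty_Ioo.2 hx.1).image _) ?_
  rintro _ ⟨y, hy, rfl⟩
  exact hf.slope_mono hx ⟨⟨hy.1, hy.2.trans hx.2⟩, hy.2.ne⟩
    ⟨⟨hx.1.trans hw.1, hw.2⟩, hw.1.ne'⟩ (hy.2.trans hw.1).le

/-- The pointwise limit of convex functions is convex. -/
lemma convexOn_of_tendsto {s : Set ℝ} (hs : Convex ℝ s) {g : ℕ → ℝ → ℝ} {G : ℝ → ℝ}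
    (hconv : ∀ n, ConvexOn ℝ s (g n))
    (hlim : ∀ x ∈ s, Filter.Tendsto (fun n => g n x) Filter.atTop (nhds (G x))) :
    ConvexOn ℝ s G := by
  refine ⟨hs, fun x hx y hy p q hp hq hpq => ?_⟩
  have h1 : Tendsto (fun n => g n (p • x + q • y)) atTop (𝓝 (G (p • x + q • y))) :=
    hlim _ (hs hx hy hp hq hpq)
  have h2 : Tendsto (fun n => p • g n x + q • g n y) atTop (𝓝 (p • G x + q • G y)) :=
    ((hlim x hx).const_smul p).add ((hlim y hy).const_smul q)
  exact le_of_tendsto_of_tendsto' h1 h2 fun n => (hconv n).2 hx hy hp hq hpq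

theorem griffiths_lemma_one_sided (a b : ℝ) (g : ℕ → ℝ → ℝ) (G : ℝ → ℝ)
    (hconv : ∀ n, ConvexOn ℝ (Set.Ioo a b) (g n))
    (hlim : ∀ x ∈ Set.Ioo a b, Filter.Tendsto (fun n => g n x) Filter.atTop (nhds (G x))) :
    ∀ x ∈ Set.Ioo a b,
      Filter.limsup (fun n => derivWithin (g n) (Set.Ioi x) x) Filter.atTop ≤
          derivWithin G (Set.Ioi x) x ∧
        derivWithin G (Set.Iio x) x ≤
          Filter.liminf (fun n => derivWithin (g n) (Set.Iio x) x) Filter.atTop := by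
  intro x hx
  have hG : ConvexOn ℝ (Set.Ioo a b) G :=
    convexOn_of_tendsto (convex_Ioo a b) hconv hlim
  have hslope : ∀ y ∈ Set.Ioo a b,
      Tendsto (fun n => slope (g n) x y) atTop (𝓝 (slope G x y)) := by
    intro y hy
    simp only [slope_def_field]
    exact ((hlim y hy).sub (hlim x hx)).div_const _
  obtain ⟨w, hw⟩ := nonempty_Ioo.2 hx.1
  obtain ⟨w', hw'⟩ := nonempty_Ioo.2 hx.2
  have hwS : w ∈ Set.Ioo a b := ⟨hw.1, hw.2.trans hx.2⟩
  have hw'S : w' ∈ Set.Ioo a b := ⟨hx.1.trans hw'.1, hw'.2⟩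
  set dR : ℕ → ℝ := fun n => derivWithin (g n) (Set.Ioi x) x with hdR
  set dL : ℕ → ℝ := fun n => derivWithin (g n) (Set.Iio x) x with hdL
  -- coboundedness of dR from below
  have hRlb : ∀ n, slope (g n) x w ≤ dR n :=
    fun n => slope_le_derivWithin_Ioi (hconv n) hx hw
  have hRcobdd : IsCoboundedUnder (· ≤ ·) atTop dR := by
    refine isCoboundedUnder_le_of_eventually_le atTop (x := slope G x w - 1) ?_
    filter_upwards [Filter.Tendsto.eventually_const_le (by linarith : slope G x w - 1 < slope G x w)
      (hslope w hwS)] with n hn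
    exact hn.trans (hRlb n)
  -- coboundedness of dL from above
  have hLub : ∀ n, dL n ≤ slope (g n) x w' :=
    fun n => derivWithin_Iio_le_slope (hconv n) hx hw'
  have hLcobdd : IsCoboundedUnder (· ≥ ·) atTop dL := by
    refine isCoboundedUnder_ge_of_eventually_le atTop (x := slope G x w' + 1) ?_
    filter_upwards [Filter.Tendsto.eventually_le_const (by linarith : slope G x w' < slope G x w' + 1)
      (hslope w' hw'S)] with n hn
    exact (hLub n).trans hn
  constructor
  · -- limsup dR ≤ right derivative of G
    rw [convex_derivWithin_Ioi_eq hG hx]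
    refine le_csInf ((nonempty_Ioo.2 hx.2).image _) ?_
    rintro _ ⟨y, hy, rfl⟩
    have hyS : y ∈ Set.Ioo a b := ⟨hx.1.trans hy.1, hy.2⟩
    have h1 : ∀ n, dR n ≤ slope (g n) x y := fun n =>
      (hconv n).rightDeriv_le_slope hx hyS hy.1
        (convex_hasDerivWithinAt_Ioi (hconv n) hx).differentiableWithinAt
    calc limsup dR atTop ≤ limsup (fun n => slope (g n) x y) atTop :=
          limsup_le_limsup (Eventually.of_forall h1) hRcobdd
            (hslope y hyS).isBoundedUnder_le
      _ = slope G x y := (hslope y hyS).limsup_eq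
  · -- left derivative of G ≤ liminf dL
    rw [convex_derivWithin_Iio_eq hG hx]
    refine csSup_le ((nonempty_Ioo.2 hx.1).image _) ?_
    rintro _ ⟨y, hy, rfl⟩
    have hyS : y ∈ Set.Ioo a b := ⟨hy.1, hy.2.trans hx.2⟩
    have h1 : ∀ n, slope (g n) x y ≤ dL n := fun n => by
      rw [slope_comm]
      exact (hconv n).slope_le_leftDeriv hyS hx hy.2
        (convex_hasDerivWithinAt_Iio (hconv n) hx).differentiableWithinAt
    calc slope G x y = liminf (fun n => slope (g n) x y) atTop :=
          ((hslope y hyS).liminf_eq).symm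
      _ ≤ liminf dL atTop :=
          liminf_le_liminf (Eventually.of_forall h1)
            (hslope y hyS).isBoundedUnder_ge hLcobdd
end
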